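/- Let τ be a normalized weight function satisfying (ω₃) with γ(τ) > 0, and let T^x_p := exp((1/x)φ*_τ(xp)). Let a, K₂, K₃ > 0, K₁ ≥ 1, and let g:(0,∞)→[0,∞) be a measurable function satisfying K₁^{−a}·exp(−2a·τ(t/K₂)) ≤ g(t) ≤ exp(−(a/2)·τ(t/K₃)) for all t>0. Then for every p∈ℕ the moment m(p) := ∫₀^∞ t^p g(t) dt is finite, and there exist constants C₁, C₂ > 0, depending on a (and τ, K₁, K₂, K₃) but not on p, such that C₁·(K₂/2)^p·T_p^{1/(2a)} ≤ m(p) ≤ C₂·K₃^p·T_p^{4/a} for all p∈ℕ. -/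

import Mathlib

open Filter MeasureTheory Set Asymptotics Topology

noncomputable section

/-- A weight function: continuous and nondecreasing on `[0,∞)`, vanishing at `0`,
and tending to `∞` at `∞`. -/
def IsWeightFun (ω : ℝ → ℝ) : Prop :=
  ContinuousOn ω (Ici 0) ∧ MonotoneOn ω (Ici 0) ∧ ω 0 = 0 ∧ Tendsto ω atTop atTop

/-- A weight function is normalized if it vanishes on `[0,1]`. -/
def IsNormalized (ω : ℝ → ℝ) : Prop :=
  ∀ t ∈ Icc (0 : ℝ) 1, ω t = 0

/-- Property `(P_{ω,γ})`: there is `K > 1` with `limsup_{t→∞} ω(K^γ t)/ω(t) < K`. -/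
def PropGamma (ω : ℝ → ℝ) (γ : ℝ) : Prop :=
  ∃ K : ℝ, 1 < K ∧ limsup (fun t : ℝ => ω (K ^ γ * t) / ω t) atTop < K

/-- The growth index `γ(ω)`, valued in `ℝ≥0∞`; it equals `0` when no `γ > 0`
satisfies `(P_{ω,γ})` (as `sSup ∅ = 0` in `ℝ≥0∞`). -/
def gammaIndex (ω : ℝ → ℝ) : ENNReal :=
  sSup (ENNReal.ofReal '' {γ : ℝ | 0 < γ ∧ PropGamma ω γ})

/-- The Legendre-Fenchel-Young conjugate `φ*_τ(x) = sup_{y ≥ 0} (x y - τ(e^y))`. -/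
def legConj (τ : ℝ → ℝ) (x : ℝ) : ℝ :=
  sSup ((fun y => x * y - τ (Real.exp y)) '' Ici 0)

/-- The weight matrix associated with `τ`: `T^x_p = exp((1/x) φ*_τ(x p))`. -/
def Tmat (τ : ℝ → ℝ) (x : ℝ) (p : ℕ) : ℝ :=
  Real.exp ((1 / x) * legConj τ (x * p))

lemma tau_nonneg {τ : ℝ → ℝ} (hτ : IsWeightFun τ) {s : ℝ} (hs : 0 ≤ s) : 0 ≤ τ s := by
  have h := hτ.2.1 (mem_Ici.2 le_rfl) (mem_Ici.2 hs) hs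
  rw [hτ.2.2.1] at h
  exact h

lemma log_le_of_o {τ : ℝ → ℝ} (hτ : IsWeightFun τ)
    (h3 : (fun t => Real.log t) =o[atTop] τ) {c : ℝ} (hc : 0 < c) :
    ∃ S : ℝ, 1 ≤ S ∧ ∀ s, S ≤ s → Real.log s ≤ c * τ s := by
  obtain ⟨S₀, hS₀⟩ := eventually_atTop.1 (h3.def hc)
  refine ⟨max S₀ 1, le_max_right _ _, fun s hs => ?_⟩
  have h1 : (1:ℝ) ≤ s := le_trans (le_max_right _ _) hs
  have h2 := hS₀ s (le_trans (le_max_left _ _) hs)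
  have hτs : 0 ≤ τ s := tau_nonneg hτ (by linarith)
  have hls : 0 ≤ Real.log s := Real.log_nonneg h1
  calc Real.log s = ‖Real.log s‖ := (Real.norm_of_nonneg hls).symm
    _ ≤ c * ‖τ s‖ := h2
    _ = c * τ s := by rw [Real.norm_of_nonneg hτs]

lemma legConj_bddAbove {τ : ℝ → ℝ} (hτ : IsWeightFun τ)
    (h3 : (fun t => Real.log t) =o[atTop] τ) {x : ℝ} (hx : 0 ≤ x) :
    BddAbove ((fun y => x * y - τ (Real.exp y)) '' Ici 0) := by
  obtain ⟨S, hS1, hS⟩ := log_le_of_o hτ h3 (c := 1/(x+1)) (by positivity)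
  set Y := max (Real.log S) 0 with hY
  have hY0 : 0 ≤ Y := le_max_right _ _
  refine ⟨x * Y, ?_⟩
  rintro z ⟨y, hy, rfl⟩
  have hy0 : (0:ℝ) ≤ y := hy
  have hτy : 0 ≤ τ (Real.exp y) := tau_nonneg hτ (Real.exp_pos y).le
  rcases le_total y Y with h | h
  · have : x * y ≤ x * Y := mul_le_mul_of_nonneg_left h hx
    simp only
    linarith
  · have hyS : S ≤ Real.exp y := by
      have hlS : Real.log S ≤ y := le_trans (le_max_left _ _) h
      calc S = Real.exp (Real.log S) := (Real.exp_log (by linarith)).symm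
        _ ≤ Real.exp y := Real.exp_le_exp.2 hlS
    have h2 := hS _ hyS
    rw [Real.log_exp] at h2
    have hx1 : (0:ℝ) < x + 1 := by linarith
    have h4 : (x + 1) * y ≤ τ (Real.exp y) := by
      have h3' := mul_le_mul_of_nonneg_left h2 hx1.le
      rw [one_div, ← mul_assoc, mul_inv_cancel₀ hx1.ne', one_mul] at h3'
      exact h3'
    have h5 : x * y ≤ τ (Real.exp y) := by nlinarith
    have h6 : 0 ≤ x * Y := mul_nonneg hx hY0
    simp only
    linarith

lemma legConj_nonempty {τ : ℝ → ℝ} :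
    ((fun y => x * y - τ (Real.exp y)) '' Ici 0).Nonempty :=
  ⟨_, ⟨0, self_mem_Ici, rfl⟩⟩

lemma le_legConj {τ : ℝ → ℝ} (hτ : IsWeightFun τ)
    (h3 : (fun t => Real.log t) =o[atTop] τ) {x : ℝ} (hx : 0 ≤ x)
    {y : ℝ} (hy : 0 ≤ y) : x * y - τ (Real.exp y) ≤ legConj τ x :=
  le_csSup (legConj_bddAbove hτ h3 hx) ⟨y, hy, rfl⟩

lemma legConj_nonneg {τ : ℝ → ℝ} (hτ : IsWeightFun τ) (hn : IsNormalized τ)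
    (h3 : (fun t => Real.log t) =o[atTop] τ) {x : ℝ} (hx : 0 ≤ x) :
    0 ≤ legConj τ x := by
  have h := le_legConj hτ h3 hx (le_refl (0:ℝ))
  rw [Real.exp_zero, hn 1 ⟨zero_le_one, le_rfl⟩] at h
  linarith

lemma keyA {τ : ℝ → ℝ} (hτ : IsWeightFun τ)
    (h3 : (fun t => Real.log t) =o[atTop] τ) {a : ℝ} (ha : 0 < a)
    (p : ℕ) {s : ℝ} (hs : 1 ≤ s) :
    s ^ p * Real.exp (-(a/4) * τ s) ≤ Tmat τ (4/a) p := by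
  have hy : 0 ≤ Real.log s := Real.log_nonneg hs
  have hmem := le_legConj hτ h3 (x := (4/a) * p) (by positivity) hy
  rw [Real.exp_log (by linarith)] at hmem
  have hsp : s ^ p = Real.exp ((p:ℝ) * Real.log s) := by
    rw [Real.exp_nat_mul, Real.exp_log (by linarith)]
  rw [hsp, ← Real.exp_add]
  unfold Tmat
  apply Real.exp_le_exp.2
  have h4a : (1:ℝ)/(4/a) = a/4 := by
    rw [one_div_div]
  rw [h4a]
  have hmul := mul_le_mul_of_nonneg_left hmem (by positivity : (0:ℝ) ≤ a/4)
  have hcan : (a/4) * ((4/a) * (p:ℝ) * Real.log s - τ s)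
      = (p:ℝ) * Real.log s - (a/4) * τ s := by
    field_simp
  rw [hcan] at hmul
  linarith

lemma Tmat_pos {τ : ℝ → ℝ} (x : ℝ) (p : ℕ) : 0 < Tmat τ x p := Real.exp_pos _

lemma one_le_Tmat {τ : ℝ → ℝ} (hτ : IsWeightFun τ) (hn : IsNormalized τ)
    (h3 : (fun t => Real.log t) =o[atTop] τ) {x : ℝ} (hx : 0 < x) (p : ℕ) :
    1 ≤ Tmat τ x p := by
  rw [Tmat, ← Real.exp_zero]
  apply Real.exp_le_exp.2
  have := legConj_nonneg hτ hn h3 (x := x * p) (by positivity)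
  positivity

/-- Estimates for the moments of a kernel enjoying two-sided bounds in terms of a
normalized weight function `τ` with `(ω₃)` and `γ(τ) > 0`: the moments are finite
and comparable from above and below to the sequences `T^{4/a}` and `T^{1/(2a)}` of
the associated weight matrix. -/
theorem stmt17 (τ : ℝ → ℝ) (hτ : IsWeightFun τ) (hn : IsNormalized τ)
    (h3 : (fun t => Real.log t) =o[atTop] τ)
    (hγ : 0 < gammaIndex τ)
    (a K₂ K₃ : ℝ) (ha : 0 < a) (hK₂ : 0 < K₂) (hK₃ : 0 < K₃)
    (K₁ : ℝ) (hK₁ : 1 ≤ K₁)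
    (g : ℝ → ℝ) (hg : Measurable g)
    (hbound : ∀ t : ℝ, 0 < t →
      K₁ ^ (-a) * Real.exp (-(2 * a) * τ (t / K₂)) ≤ g t ∧
      g t ≤ Real.exp (-(a / 2) * τ (t / K₃))) :
    (∀ p : ℕ, IntegrableOn (fun t => t ^ p * g t) (Ioi 0)) ∧
    ∃ C₁ : ℝ, 0 < C₁ ∧ ∃ C₂ : ℝ, 0 < C₂ ∧ ∀ p : ℕ,
      C₁ * (K₂ / 2) ^ p * Tmat τ (1 / (2 * a)) p ≤ ∫ t in Ioi (0 : ℝ), t ^ p * g t ∧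
      (∫ t in Ioi (0 : ℝ), t ^ p * g t) ≤ C₂ * K₃ ^ p * Tmat τ (4 / a) p := by
  
  have hK₁0 : (0:ℝ) < K₁ := lt_of_lt_of_le one_pos hK₁
  have hK₁a : (0:ℝ) < K₁ ^ (-a) := Real.rpow_pos_of_pos hK₁0 _
  have gnn : ∀ t : ℝ, 0 < t → 0 ≤ g t := fun t ht =>
    le_trans (by positivity) (hbound t ht).1
  have gle1 : ∀ t : ℝ, 0 < t → g t ≤ 1 := by
    intro t ht
    refine le_trans (hbound t ht).2 ?_
    rw [← Real.exp_zero]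
    apply Real.exp_le_exp.2
    have hτt := tau_nonneg hτ (show (0:ℝ) ≤ t / K₃ by positivity)
    nlinarith
  -- the little-o constant for the tail
  obtain ⟨S, hS1, hS⟩ := log_le_of_o hτ h3 (c := a/8) (by positivity)
  set M := K₃ * S with hMdef
  have hM : 0 < M := by positivity
  -- tail exponential bound
  have tail : ∀ t : ℝ, M ≤ t → Real.exp (-(a/4) * τ (t/K₃)) ≤ K₃^2 * t ^ (-2:ℝ) := by
    intro t ht
    have htpos : 0 < t := hM.trans_le ht
    have hsS : S ≤ t / K₃ := (le_div_iff₀ hK₃).2 (by rw [mul_comm]; exact ht)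
    have hs1 : (1:ℝ) ≤ t / K₃ := le_trans hS1 hsS
    have hlog := hS _ hsS
    have h1 : Real.exp (-(a/4) * τ (t/K₃)) ≤ Real.exp (-2 * Real.log (t/K₃)) := by
      apply Real.exp_le_exp.2; nlinarith
    have h2 : Real.exp (-2 * Real.log (t/K₃)) = (t/K₃) ^ (-2:ℝ) := by
      rw [Real.rpow_def_of_pos (by positivity), mul_comm]
    have hinv : ∀ u : ℝ, 0 < u → u ^ (-2:ℝ) = (u^2)⁻¹ := by
      intro u hu
      rw [show (-2:ℝ) = -((2:ℕ):ℝ) by norm_num, Real.rpow_neg hu.le, Real.rpow_natCast]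
    have h3' : (t/K₃) ^ (-2:ℝ) = K₃^2 * t ^ (-2:ℝ) := by
      rw [hinv _ (by positivity), hinv _ htpos]
      field_simp
    rw [h2, h3'] at h1
    exact h1
  -- tail bound on the integrand
  have tailf : ∀ (p : ℕ) (t : ℝ), M ≤ t →
      t ^ p * g t ≤ (K₃^p * Tmat τ (4/a) p * K₃^2) * t ^ (-2:ℝ) := by
    intro p t ht
    have htpos : 0 < t := hM.trans_le ht
    have hs1 : (1:ℝ) ≤ t / K₃ := le_trans hS1 ((le_div_iff₀ hK₃).2 (by rw [mul_comm]; exact ht))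
    have hA := keyA hτ h3 ha p hs1
    have hexp2 : Real.exp (-(a/2) * τ (t/K₃))
        = Real.exp (-(a/4) * τ (t/K₃)) * Real.exp (-(a/4) * τ (t/K₃)) := by
      rw [← Real.exp_add]; ring_nf
    have htp : (t:ℝ)^p = K₃^p * (t/K₃)^p := by
      rw [div_pow, mul_div_cancel₀]
      positivity
    calc t ^ p * g t ≤ t ^ p * Real.exp (-(a/2) * τ (t/K₃)) :=
          mul_le_mul_of_nonneg_left (hbound t htpos).2 (by positivity)
      _ = (K₃^p * ((t/K₃)^p * Real.exp (-(a/4) * τ (t/K₃)))) * Real.exp (-(a/4) * τ (t/K₃)) := by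
          rw [htp, hexp2]; ring
      _ ≤ (K₃^p * Tmat τ (4/a) p) * (K₃^2 * t ^ (-2:ℝ)) := by
          apply mul_le_mul
          · exact mul_le_mul_of_nonneg_left hA (by positivity)
          · exact tail t ht
          · positivity
          · have := Tmat_pos (τ := τ) (4/a) p
            positivity
      _ = (K₃^p * Tmat τ (4/a) p * K₃^2) * t ^ (-2:ℝ) := by ring
  have fmeas : Measurable (fun t : ℝ => t ^ 1 * g t) := (measurable_id'.pow_const 1).mul hg
  have hbdd : ∀ (p : ℕ) (t : ℝ), t ∈ Ioc (0:ℝ) M → t ^ p * g t ≤ M ^ p := by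
    intro p t ht
    calc t ^ p * g t ≤ t ^ p * 1 := mul_le_mul_of_nonneg_left (gle1 t ht.1) (pow_nonneg ht.1.le p)
      _ = t ^ p := mul_one _
      _ ≤ M ^ p := pow_le_pow_left₀ ht.1.le ht.2 p
  have int1 : ∀ p : ℕ, IntegrableOn (fun t => t ^ p * g t) (Ioc 0 M) := by
    intro p
    apply Measure.integrableOn_of_bounded (M := M ^ p) measure_Ioc_lt_top.ne
      ((measurable_id'.pow_const p).mul hg).aestronglyMeasurable
    filter_upwards [ae_restrict_mem measurableSet_Ioc] with t ht
    change ‖t ^ p * g t‖ ≤ _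
    rw [Real.norm_of_nonneg (mul_nonneg (pow_nonneg ht.1.le p) (gnn t ht.1))]
    exact hbdd p t ht
  have int2 : ∀ p : ℕ, IntegrableOn (fun t => t ^ p * g t) (Ioi M) := by
    intro p
    apply Integrable.mono'
      (((integrableOn_Ioi_rpow_of_lt (a := (-2:ℝ)) (by norm_num) hM)).const_mul
        (K₃^p * Tmat τ (4/a) p * K₃^2))
      ((measurable_id'.pow_const p).mul hg).aestronglyMeasurable
    filter_upwards [ae_restrict_mem measurableSet_Ioi] with t ht
    have htpos : (0:ℝ) < t := hM.trans ht
    change ‖t ^ p * g t‖ ≤ _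
    rw [Real.norm_of_nonneg (mul_nonneg (pow_nonneg htpos.le p) (gnn t htpos))]
    exact tailf p t ht.le
  have hunion : Ioc (0:ℝ) M ∪ Ioi M = Ioi 0 := Ioc_union_Ioi_eq_Ioi hM.le
  have intf : ∀ p : ℕ, IntegrableOn (fun t => t ^ p * g t) (Ioi 0) := by
    intro p
    rw [← hunion]
    exact (int1 p).union (int2 p)
  refine ⟨intf, ?_⟩
  have fsplit : ∀ p : ℕ, (∫ t in Ioi (0:ℝ), t ^ p * g t)
      = (∫ t in Ioc (0:ℝ) M, t ^ p * g t) + ∫ t in Ioi M, t ^ p * g t := by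
    intro p
    rw [← hunion, setIntegral_union (Ioc_disjoint_Ioi le_rfl) measurableSet_Ioi (int1 p) (int2 p)]
  refine ⟨K₁ ^ (-a) * (K₂/2) * Real.exp (-1), by positivity,
    M * Real.exp ((a/4) * τ S) + K₃^2 * M⁻¹, by positivity, fun p => ?_⟩
  constructor
  · -- lower bound
    have hTrep : Tmat τ (1/(2*a)) p = Real.exp ((2*a) * legConj τ ((1/(2*a)) * p)) := by
      rw [Tmat, one_div_one_div]
    have hεpos : (0:ℝ) < 1/(2*a) := by positivity
    obtain ⟨z, hzmem, hz⟩ := exists_lt_of_lt_csSup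
      (s := ((fun y => ((1/(2*a)) * (p:ℝ)) * y - τ (Real.exp y)) '' Ici 0))
      ⟨_, ⟨0, self_mem_Ici, rfl⟩⟩
      (show legConj τ ((1/(2*a)) * p) - 1/(2*a) < legConj τ ((1/(2*a)) * p) by linarith)
    obtain ⟨y₀, hy₀, rfl⟩ := hzmem
    have hy₀0 : (0:ℝ) ≤ y₀ := hy₀
    set s₀ := Real.exp y₀ with hs₀def
    have hs₀0 : 0 < s₀ := Real.exp_pos y₀
    have hs₀1 : 1 ≤ s₀ := Real.one_le_exp hy₀0
    have hkey : Tmat τ (1/(2*a)) p * Real.exp (-1) ≤ s₀^p * Real.exp (-(2*a) * τ s₀) := by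
      rw [hTrep, ← Real.exp_add]
      have hs₀p : s₀^p * Real.exp (-(2*a) * τ s₀) = Real.exp ((p:ℝ)*y₀ + -(2*a) * τ s₀) := by
        rw [Real.exp_add, Real.exp_nat_mul]
      rw [hs₀p]
      apply Real.exp_le_exp.2
      have hmul := mul_le_mul_of_nonneg_left hz.le (show (0:ℝ) ≤ 2*a by positivity)
      have e1 : ∀ L : ℝ, (2*a) * (L - 1/(2*a)) = 2*a*L - 1 := by
        intro L; field_simp
      have e2 : ∀ u v w : ℝ, (2*a) * ((1/(2*a) * u) * v - w) = u*v - 2*a*w := by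
        intro u v w; field_simp
      rw [e1, e2] at hmul
      linarith
    have hlo : (0:ℝ) < K₂ * s₀ / 2 := by positivity
    have hIsub : Ioc (K₂*s₀/2) (K₂*s₀) ⊆ Ioi (0:ℝ) := fun t ht => lt_trans hlo ht.1
    have hconst : ∀ t ∈ Ioc (K₂*s₀/2) (K₂*s₀),
        K₁ ^ (-a) * Real.exp (-(2*a) * τ s₀) * (K₂*s₀/2)^p ≤ t ^ p * g t := by
      intro t ht
      have ht0 : 0 < t := lt_trans hlo ht.1
      have hts : t / K₂ ≤ s₀ := by rw [div_le_iff₀ hK₂]; nlinarith [ht.2]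
      have hτmono := hτ.2.1 (mem_Ici.2 (by positivity : (0:ℝ) ≤ t/K₂))
        (mem_Ici.2 hs₀0.le) hts
      have hexp : Real.exp (-(2*a) * τ s₀) ≤ Real.exp (-(2*a) * τ (t/K₂)) :=
        Real.exp_le_exp.2 (by nlinarith [mul_nonneg (show (0:ℝ) ≤ 2*a by positivity) (sub_nonneg.2 hτmono)])
      have h1 : K₁ ^ (-a) * Real.exp (-(2*a) * τ s₀) ≤ g t :=
        le_trans (mul_le_mul_of_nonneg_left hexp hK₁a.le) (hbound t ht0).1
      have h2 : (K₂*s₀/2)^p ≤ t^p := pow_le_pow_left₀ hlo.le ht.1.le p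
      calc K₁ ^ (-a) * Real.exp (-(2*a) * τ s₀) * (K₂*s₀/2)^p ≤ g t * t^p :=
            mul_le_mul h1 h2 (by positivity) (gnn t ht0)
        _ = t^p * g t := mul_comm _ _
    have hintI : IntegrableOn (fun t => t ^ p * g t) (Ioc (K₂*s₀/2) (K₂*s₀)) :=
      (intf p).mono_set hIsub
    have step1 : (K₂*s₀/2) * (K₁ ^ (-a) * Real.exp (-(2*a) * τ s₀) * (K₂*s₀/2)^p)
        ≤ ∫ t in Ioc (K₂*s₀/2) (K₂*s₀), t ^ p * g t := by
      have hm := setIntegral_mono_on (integrableOn_const measure_Ioc_lt_top.ne)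
        hintI measurableSet_Ioc hconst
      rw [setIntegral_const, Real.volume_real_Ioc_of_le (by linarith), smul_eq_mul] at hm
      calc (K₂*s₀/2) * (K₁ ^ (-a) * Real.exp (-(2*a) * τ s₀) * (K₂*s₀/2)^p)
          = (K₂*s₀ - K₂*s₀/2) * (K₁ ^ (-a) * Real.exp (-(2*a) * τ s₀) * (K₂*s₀/2)^p) := by
            ring
        _ ≤ _ := hm
    have step2 : (∫ t in Ioc (K₂*s₀/2) (K₂*s₀), t ^ p * g t)
        ≤ ∫ t in Ioi (0:ℝ), t ^ p * g t := by
      refine setIntegral_mono_set (intf p) ?_ (HasSubset.Subset.eventuallyLE hIsub)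
      filter_upwards [ae_restrict_mem measurableSet_Ioi] with t ht
      exact mul_nonneg (pow_nonneg (le_of_lt ht) p) (gnn t ht)
    have hfin : K₁ ^ (-a) * (K₂/2) * Real.exp (-1) * (K₂/2)^p * Tmat τ (1/(2*a)) p
        ≤ (K₂*s₀/2) * (K₁ ^ (-a) * Real.exp (-(2*a) * τ s₀) * (K₂*s₀/2)^p) := by
      have hs₀pow : s₀^p ≤ s₀^(p+1) := pow_le_pow_right₀ hs₀1 (Nat.le_succ p)
      calc K₁ ^ (-a) * (K₂/2) * Real.exp (-1) * (K₂/2)^p * Tmat τ (1/(2*a)) p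
          = K₁ ^ (-a) * (K₂/2)^(p+1) * (Tmat τ (1/(2*a)) p * Real.exp (-1)) := by ring
        _ ≤ K₁ ^ (-a) * (K₂/2)^(p+1) * (s₀^p * Real.exp (-(2*a) * τ s₀)) :=
            mul_le_mul_of_nonneg_left hkey (by positivity)
        _ ≤ K₁ ^ (-a) * (K₂/2)^(p+1) * (s₀^(p+1) * Real.exp (-(2*a) * τ s₀)) :=
            mul_le_mul_of_nonneg_left
              (mul_le_mul_of_nonneg_right hs₀pow (Real.exp_pos _).le) (by positivity)
        _ = (K₂*s₀/2) * (K₁ ^ (-a) * Real.exp (-(2*a) * τ s₀) * (K₂*s₀/2)^p) := by ring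
    linarith
  · -- upper bound
    have hup1 : (∫ t in Ioc (0:ℝ) M, t ^ p * g t)
        ≤ M * Real.exp ((a/4) * τ S) * (K₃ ^ p * Tmat τ (4/a) p) := by
      have hSp : S ^ p ≤ Tmat τ (4/a) p * Real.exp ((a/4) * τ S) := by
        have hA := keyA hτ h3 ha p hS1
        have hmm := mul_le_mul_of_nonneg_right hA (Real.exp_pos ((a/4) * τ S)).le
        rw [mul_assoc, ← Real.exp_add] at hmm
        simpa using hmm
      calc (∫ t in Ioc (0:ℝ) M, t ^ p * g t) ≤ ∫ _t in Ioc (0:ℝ) M, M ^ p :=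
            setIntegral_mono_on (int1 p) (integrableOn_const measure_Ioc_lt_top.ne)
              measurableSet_Ioc (hbdd p)
        _ = M * M ^ p := by
            rw [setIntegral_const, Real.volume_real_Ioc_of_le (by linarith), smul_eq_mul, sub_zero]
        _ = M * (K₃ ^ p * S ^ p) := by rw [hMdef, mul_pow]
        _ ≤ M * (K₃ ^ p * (Tmat τ (4/a) p * Real.exp ((a/4) * τ S))) :=
            mul_le_mul_of_nonneg_left (mul_le_mul_of_nonneg_left hSp (by positivity)) hM.le
        _ = M * Real.exp ((a/4) * τ S) * (K₃ ^ p * Tmat τ (4/a) p) := by ring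
    have hup2 : (∫ t in Ioi M, t ^ p * g t) ≤ K₃^2 * M⁻¹ * (K₃ ^ p * Tmat τ (4/a) p) := by
      have hTm := Tmat_pos (τ := τ) (4/a) p
      calc (∫ t in Ioi M, t ^ p * g t)
          ≤ ∫ t in Ioi M, (K₃^p * Tmat τ (4/a) p * K₃^2) * t ^ (-2:ℝ) :=
            setIntegral_mono_on (int2 p)
              (((integrableOn_Ioi_rpow_of_lt (a := (-2:ℝ)) (by norm_num) hM)).const_mul _)
              measurableSet_Ioi (fun t ht => tailf p t (le_of_lt ht))
        _ = (K₃^p * Tmat τ (4/a) p * K₃^2) * ∫ t in Ioi M, t ^ (-2:ℝ) :=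
            MeasureTheory.integral_const_mul _ _
        _ = (K₃^p * Tmat τ (4/a) p * K₃^2) * M⁻¹ := by
            rw [integral_Ioi_rpow_of_lt (by norm_num) hM,
              show (-2:ℝ)+1 = -1 by norm_num, Real.rpow_neg_one]
            ring
        _ = K₃^2 * M⁻¹ * (K₃ ^ p * Tmat τ (4/a) p) := by ring
    rw [fsplit p]
    refine le_trans (add_le_add hup1 hup2) (le_of_eq (by ring))
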